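/- Let A be a real tensor of size n×n×n₃, invertible with inverse A⁻¹, and let E be a tensor of size n×n×n₃ with ‖A⁻¹‖₂·‖E‖₂ < 1. Then B = A+E (entrywise sum) is invertible, and any tensor B⁻¹ with B*B⁻¹ = B⁻¹*B = 𝓘 satisfies ‖B⁻¹‖_F ≤ ‖A⁻¹‖_F/γ and ‖B⁻¹‖₂ ≤ ‖A⁻¹‖₂/γ, where γ = 1 − ‖A⁻¹‖₂·‖E‖₂. -/

import Mathlib

open scoped Matrix.Norms.L2Operator

noncomputable section

/-- The t-product of third-order tensors. -/
def tProd {n₁ n₂ n₃ n₄ : ℕ} [NeZero n₃] (A : Fin n₁ → Fin n₂ → ZMod n₃ → ℝ)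
    (B : Fin n₂ → Fin n₄ → ZMod n₃ → ℝ) : Fin n₁ → Fin n₄ → ZMod n₃ → ℝ :=
  fun i j k => ∑ l : Fin n₂, ∑ m : ZMod n₃, A i l (k - m) * B l j m

/-- The Frobenius norm of a third-order tensor. -/
def frobNorm {n₁ n₂ n₃ : ℕ} [NeZero n₃] (A : Fin n₁ → Fin n₂ → ZMod n₃ → ℝ) : ℝ :=
  Real.sqrt (∑ i : Fin n₁, ∑ j : Fin n₂, ∑ k : ZMod n₃, (A i j k) ^ 2)

/-- The block circulant matrix of a third-order tensor. -/
def bcirc {n₁ n₂ n₃ : ℕ} (A : Fin n₁ → Fin n₂ → ZMod n₃ → ℝ) :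
    Matrix (Fin n₁ × ZMod n₃) (Fin n₂ × ZMod n₃) ℝ :=
  fun p q => A p.1 q.1 (p.2 - q.2)

/-- The spectral norm of a third-order tensor: the L2 operator norm of its
block circulant matrix. -/
def specNorm {n₁ n₂ n₃ : ℕ} [NeZero n₃] (A : Fin n₁ → Fin n₂ → ZMod n₃ → ℝ) : ℝ :=
  ‖bcirc A‖

/-- The identity tensor. -/
def tId (n n₃ : ℕ) : Fin n → Fin n → ZMod n₃ → ℝ :=
  fun i j k => if i = j ∧ k = 0 then 1 else 0

/-- The tensor transpose. -/
def tTrans {n₁ n₂ n₃ : ℕ} (A : Fin n₁ → Fin n₂ → ZMod n₃ → ℝ) :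
    Fin n₂ → Fin n₁ → ZMod n₃ → ℝ :=
  fun i j k => A j i (-k)

/-- `X` is a Moore-Penrose inverse of `A`. -/
def IsMPInv {n₁ n₂ n₃ : ℕ} [NeZero n₃] (A : Fin n₁ → Fin n₂ → ZMod n₃ → ℝ)
    (X : Fin n₂ → Fin n₁ → ZMod n₃ → ℝ) : Prop :=
  tProd (tProd A X) A = A ∧ tProd (tProd X A) X = X ∧
    tTrans (tProd A X) = tProd A X ∧ tTrans (tProd X A) = tProd X A

/-- The `i`-th DFT block of a third-order tensor. -/
def dftBlock {n₁ n₂ n₃ : ℕ} [NeZero n₃] (A : Fin n₁ → Fin n₂ → ZMod n₃ → ℝ) (i : ZMod n₃) :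
    Matrix (Fin n₁) (Fin n₂) ℂ :=
  fun p q => ∑ k : ZMod n₃,
    Complex.exp (-2 * Real.pi * Complex.I * (i.val : ℂ) * (k.val : ℂ) / (n₃ : ℂ)) * (A p q k : ℂ)

end

/-!
Under `bcirc` the t-product becomes matrix multiplication and `𝓘` the identity, so the argument
takes place in the matrix algebra with its L2 operator norm. There
`bcirc (A + E) = bcirc A * (1 + bcirc A⁻¹ * bcirc E)` is invertible by the Neumann series, and a
tensor inverse exists because left t-multiplication by `A + E` is then an injective, hence
surjective, linear endomorphism of a finite-dimensional space. Both bounds follow from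
`B⁻¹ = A⁻¹ - A⁻¹ * E * B⁻¹` together with `‖X * Y‖_F ≤ ‖X‖₂ ‖Y‖_F`, which is the operator
bound applied to each column of the unfolding of `Y`.
-/

lemma le_div_one_sub_of_le_add_mul {x a c : ℝ} (hc : c < 1) (h : x ≤ a + c * x) :
    x ≤ a / (1 - c) := by
  rw [le_div_iff₀ (sub_pos.mpr hc)]
  linarith

lemma eq_sub_mul_mul_of_mul_eq_one {R : Type*} [Ring R] {a b e c : R} (hba : b * a = 1)
    (hc : (a + e) * c = 1) : c = b - b * e * c := by
  calc c = b * a * c := by rw [hba, one_mul]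
    _ = b * ((a + e) * c) - b * e * c := by noncomm_ring
    _ = b - b * e * c := by rw [hc, mul_one]

lemma isUnit_add_of_norm_mul_norm_lt_one {R : Type*} [NormedRing R] [HasSummableGeomSeries R]
    {a b e : R} (hab : a * b = 1) (hba : b * a = 1) (h : ‖b‖ * ‖e‖ < 1) : IsUnit (a + e) := by
  have hsmall : ‖-(b * e)‖ < 1 := (norm_neg (b * e)).trans_lt ((norm_mul_le b e).trans_lt h)
  have hfactor : a + e = a * (1 - -(b * e)) := by
    rw [sub_neg_eq_add, mul_add, mul_one, ← mul_assoc, hab, one_mul]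
  rw [hfactor]
  exact (Units.isUnit ⟨a, b, hab, hba⟩).mul (Units.oneSub _ hsmall).isUnit

lemma Matrix.sum_norm_mul_apply_sq_le {𝕜 l m n : Type*} [RCLike 𝕜] [Fintype l] [Fintype m]
    [DecidableEq m] [Fintype n] (M : Matrix l m 𝕜) (N : Matrix m n 𝕜) :
    ∑ i, ∑ j, ‖(M * N) i j‖ ^ 2 ≤ ‖M‖ ^ 2 * ∑ i, ∑ j, ‖N i j‖ ^ 2 := by
  rw [Finset.sum_comm, Finset.sum_comm (f := fun i j => ‖N i j‖ ^ 2), Finset.mul_sum]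
  refine Finset.sum_le_sum fun j _ => ?_
  have hcol := M.l2_opNorm_mulVec (WithLp.toLp 2 fun k => N k j)
  rw [← Real.sqrt_le_sqrt_iff (by positivity), Real.sqrt_mul (by positivity),
    Real.sqrt_sq (norm_nonneg _)]
  convert hcol using 1
  · rw [EuclideanSpace.norm_eq]; simp [Matrix.mul_apply, Matrix.mulVec, dotProduct]
  · rw [EuclideanSpace.norm_eq]

section Tensor

variable {n₃ : ℕ} [NeZero n₃]

lemma bcirc_tProd {n₁ n₂ n₄ : ℕ} (A : Fin n₁ → Fin n₂ → ZMod n₃ → ℝ)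
    (B : Fin n₂ → Fin n₄ → ZMod n₃ → ℝ) : bcirc (tProd A B) = bcirc A * bcirc B := by
  ext ⟨i, k⟩ ⟨j, m⟩
  simp only [bcirc, tProd, Matrix.mul_apply, Fintype.sum_prod_type]
  refine Finset.sum_congr rfl fun l _ => Fintype.sum_equiv (Equiv.addRight m) _ _ fun p => ?_
  simp only [Equiv.coe_addRight, add_sub_cancel_right, sub_add_eq_sub_sub, sub_right_comm]

omit [NeZero n₃] in
lemma bcirc_tId (n : ℕ) : bcirc (tId n n₃) = 1 := by
  ext ⟨i, k⟩ ⟨j, m⟩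
  simp only [bcirc, tId, Matrix.one_apply, Prod.mk.injEq, sub_eq_zero]

omit [NeZero n₃] in
lemma bcirc_injective {n₁ n₂ : ℕ} :
    Function.Injective (bcirc : (Fin n₁ → Fin n₂ → ZMod n₃ → ℝ) → _) := fun A B h => by
  funext i j k
  simpa [bcirc] using congrFun₂ h (i, k) (j, 0)

omit [NeZero n₃] in
lemma bcirc_sub {n₁ n₂ : ℕ} (A B : Fin n₁ → Fin n₂ → ZMod n₃ → ℝ) :
    bcirc (A - B) = bcirc A - bcirc B :=
  rfl

lemma specNorm_tProd_le {n₁ n₂ n₄ : ℕ} (A : Fin n₁ → Fin n₂ → ZMod n₃ → ℝ)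
    (B : Fin n₂ → Fin n₄ → ZMod n₃ → ℝ) : specNorm (tProd A B) ≤ specNorm A * specNorm B := by
  rw [specNorm, bcirc_tProd]
  exact Matrix.l2_opNorm_mul _ _

lemma specNorm_sub_le {n₁ n₂ : ℕ} (A B : Fin n₁ → Fin n₂ → ZMod n₃ → ℝ) :
    specNorm (A - B) ≤ specNorm A + specNorm B := by
  rw [specNorm, bcirc_sub]
  exact norm_sub_le _ _

lemma frobNorm_nonneg {n₁ n₂ : ℕ} (A : Fin n₁ → Fin n₂ → ZMod n₃ → ℝ) : 0 ≤ frobNorm A :=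
  Real.sqrt_nonneg _

def tUnfold {n₁ n₂ : ℕ} (A : Fin n₁ → Fin n₂ → ZMod n₃ → ℝ) :
    Matrix (Fin n₁ × ZMod n₃) (Fin n₂) ℝ :=
  fun p j => A p.1 j p.2

lemma tUnfold_tProd {n₁ n₂ n₄ : ℕ} (A : Fin n₁ → Fin n₂ → ZMod n₃ → ℝ)
    (B : Fin n₂ → Fin n₄ → ZMod n₃ → ℝ) : tUnfold (tProd A B) = bcirc A * tUnfold B := by
  ext ⟨i, k⟩ j
  simp [tUnfold, tProd, bcirc, Matrix.mul_apply, Fintype.sum_prod_type]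

lemma frobNorm_sq_eq_sum_tUnfold {n₁ n₂ : ℕ} (A : Fin n₁ → Fin n₂ → ZMod n₃ → ℝ) :
    frobNorm A ^ 2 = ∑ p, ∑ j, ‖tUnfold A p j‖ ^ 2 := by
  rw [frobNorm, Real.sq_sqrt (by positivity), Fintype.sum_prod_type]
  simp only [tUnfold, Real.norm_eq_abs, sq_abs]
  exact Finset.sum_congr rfl fun i _ => Finset.sum_comm

lemma frobNorm_tProd_le {n₁ n₂ n₄ : ℕ} (A : Fin n₁ → Fin n₂ → ZMod n₃ → ℝ)
    (B : Fin n₂ → Fin n₄ → ZMod n₃ → ℝ) : frobNorm (tProd A B) ≤ specNorm A * frobNorm B := by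
  refine le_of_pow_le_pow_left₀ two_ne_zero
    (mul_nonneg (norm_nonneg (bcirc A)) (frobNorm_nonneg B)) ?_
  rw [mul_pow, frobNorm_sq_eq_sum_tUnfold, frobNorm_sq_eq_sum_tUnfold, tUnfold_tProd]
  exact Matrix.sum_norm_mul_apply_sq_le _ _

def tVec {n₁ n₂ : ℕ} (A : Fin n₁ → Fin n₂ → ZMod n₃ → ℝ) :
    EuclideanSpace ℝ (Fin n₁ × Fin n₂ × ZMod n₃) :=
  WithLp.toLp 2 fun p => A p.1 p.2.1 p.2.2

lemma frobNorm_eq_norm_tVec {n₁ n₂ : ℕ} (A : Fin n₁ → Fin n₂ → ZMod n₃ → ℝ) :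
    frobNorm A = ‖tVec A‖ := by
  simp [EuclideanSpace.norm_eq, frobNorm, tVec, Fintype.sum_prod_type]

lemma frobNorm_sub_le {n₁ n₂ : ℕ} (A B : Fin n₁ → Fin n₂ → ZMod n₃ → ℝ) :
    frobNorm (A - B) ≤ frobNorm A + frobNorm B := by
  simp only [frobNorm_eq_norm_tVec]
  exact norm_sub_le (tVec A) (tVec B)

lemma exists_tProd_eq_tId_of_isUnit_bcirc {n : ℕ} {B : Fin n → Fin n → ZMod n₃ → ℝ}
    (hB : IsUnit (bcirc B)) : ∃ C, tProd B C = tId n n₃ ∧ tProd C B = tId n n₃ := by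
  let L : (Fin n → Fin n → ZMod n₃ → ℝ) →ₗ[ℝ] (Fin n → Fin n → ZMod n₃ → ℝ) :=
    { toFun := tProd B
      map_add' := fun X Y => by
        funext i j k
        simp [tProd, mul_add, Finset.sum_add_distrib]
      map_smul' := fun c X => by
        funext i j k
        simp [tProd, Finset.mul_sum, mul_left_comm] }
  have hL : Function.Injective L := fun X Y (h : tProd B X = tProd B Y) =>
    bcirc_injective <| hB.mul_right_injective <| by
      simpa only [← bcirc_tProd] using congrArg bcirc h
  obtain ⟨C, hC⟩ := LinearMap.injective_iff_surjective.mp hL (tId n n₃)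
  refine ⟨C, hC, bcirc_injective ?_⟩
  rw [bcirc_tProd, bcirc_tId, mul_eq_one_comm, ← bcirc_tProd]
  exact (congrArg bcirc hC).trans (bcirc_tId n)

end Tensor

theorem perturbed_inverse_norm_bound_general (n n₃ : ℕ) [NeZero n₃]
    (A Ainv E : Fin n → Fin n → ZMod n₃ → ℝ)
    (hA₁ : tProd A Ainv = tId n n₃) (hA₂ : tProd Ainv A = tId n n₃)
    (hE : specNorm Ainv * specNorm E < 1) :
    (∃ C : Fin n → Fin n → ZMod n₃ → ℝ,
        tProd (A + E) C = tId n n₃ ∧ tProd C (A + E) = tId n n₃) ∧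
      ∀ Binv : Fin n → Fin n → ZMod n₃ → ℝ,
        tProd (A + E) Binv = tId n n₃ → tProd Binv (A + E) = tId n n₃ →
          frobNorm Binv ≤ frobNorm Ainv / (1 - specNorm Ainv * specNorm E) ∧
            specNorm Binv ≤ specNorm Ainv / (1 - specNorm Ainv * specNorm E) := by
  have hA : bcirc A * bcirc Ainv = 1 := by rw [← bcirc_tProd, hA₁, bcirc_tId]
  have hA' : bcirc Ainv * bcirc A = 1 := by rw [← bcirc_tProd, hA₂, bcirc_tId]
  refine ⟨exists_tProd_eq_tId_of_isUnit_bcirc (isUnit_add_of_norm_mul_norm_lt_one hA hA' hE),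
    fun Binv hB _ => ?_⟩
  have hBinv : Binv = Ainv - tProd (tProd Ainv E) Binv := bcirc_injective <| by
    have hB' : bcirc (A + E) * bcirc Binv = 1 := by rw [← bcirc_tProd, hB, bcirc_tId]
    rw [bcirc_sub, bcirc_tProd, bcirc_tProd]
    exact eq_sub_mul_mul_of_mul_eq_one hA' hB'
  have hAE := specNorm_tProd_le Ainv E
  constructor
  · refine le_div_one_sub_of_le_add_mul hE ?_
    calc frobNorm Binv ≤ frobNorm Ainv + frobNorm (tProd (tProd Ainv E) Binv) := by
          conv_lhs => rw [hBinv]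
          exact frobNorm_sub_le _ _
      _ ≤ frobNorm Ainv + specNorm Ainv * specNorm E * frobNorm Binv := by
          grw [frobNorm_tProd_le, hAE]
          exact frobNorm_nonneg Binv
  · refine le_div_one_sub_of_le_add_mul hE ?_
    calc specNorm Binv ≤ specNorm Ainv + specNorm (tProd (tProd Ainv E) Binv) := by
          conv_lhs => rw [hBinv]
          exact specNorm_sub_le _ _
      _ ≤ specNorm Ainv + specNorm Ainv * specNorm E * specNorm Binv := by
          grw [specNorm_tProd_le, hAE]
          exact norm_nonneg _

theorem perturbed_inverse_norm_bound (n n₃ : ℕ) [NeZero n₃] (hn : 0 < n)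
    (A Ainv E : Fin n → Fin n → ZMod n₃ → ℝ)
    (hA₁ : tProd A Ainv = tId n n₃) (hA₂ : tProd Ainv A = tId n n₃)
    (hE : specNorm Ainv * specNorm E < 1) :
    (∃ C : Fin n → Fin n → ZMod n₃ → ℝ,
        tProd (A + E) C = tId n n₃ ∧ tProd C (A + E) = tId n n₃) ∧
      ∀ Binv : Fin n → Fin n → ZMod n₃ → ℝ,
        tProd (A + E) Binv = tId n n₃ → tProd Binv (A + E) = tId n n₃ →
          frobNorm Binv ≤ frobNorm Ainv / (1 - specNorm Ainv * specNorm E) ∧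
            specNorm Binv ≤ specNorm Ainv / (1 - specNorm Ainv * specNorm E) :=
  perturbed_inverse_norm_bound_general n n₃ A Ainv E hA₁ hA₂ hE
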